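/- arXiv:2402.10780 — 5 statements merged into one kernel-verified Lean document; each statement's English description precedes it below -/
import Mathlib

section
/- For q > 0, the union over k ∈ (-π, π] of the spectra of the matrices H(k) (with H(k) as vertex-diagonal 2+q, 2-q and off-diagonal -(1+e^{±ik})) equals the set [2 - √(4+q²), 2-q] ∪ [2+q, 2+√(4+q²)]. In particular this set has a gap of length 2q. -/
/-!
The characteristic equation of `H(k)` is `(x - 2 - q)(x - 2 + q) = |1 + e^{ik}|² = 2 + 2 cos k`,
i.e. `(x - 2)² = q² + 2 + 2 cos k`. As `k` runs over `(-π, π]`, `2 + 2 cos k` sweeps out `[0, 4]`,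
so `x` lies in the union of the spectra exactly when `q² ≤ (x - 2)² ≤ q² + 4`, which for `q ≥ 0`
is the union of the two bands `2 ± [q, √(4 + q²)]`.
-/

open Real Complex

theorem Matrix.mem_spectrum_fin_two {K : Type*} [Field K] (a b c d x : K) :
    x ∈ spectrum K !![a, b; c, d] ↔ (x - a) * (x - d) = b * c := by
  rw [spectrum.mem_iff, Matrix.isUnit_iff_isUnit_det, isUnit_iff_ne_zero, not_not,
    Matrix.det_fin_two, sub_eq_zero]
  simp [Matrix.algebraMap_eq_diagonal]

theorem Complex.one_add_exp_mul_one_add_exp_neg (k : ℝ) :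
    (1 + exp (I * k)) * (1 + exp (-(I * k))) = ((2 + 2 * Real.cos k : ℝ) : ℂ) := by
  have hprod : exp (I * k) * exp (-(I * k)) = 1 := by rw [← Complex.exp_add]; simp
  push_cast [ofReal_cos, Complex.cos]
  rw [neg_mul, mul_comm (k : ℂ) I]
  linear_combination hprod

theorem Real.surjOn_cos_Ioc : Set.SurjOn cos (Set.Ioc (-π) π) (Set.Icc (-1) 1) :=
  surjOn_cos.mono (Set.Icc_subset_Ioc (by linarith [pi_pos]) le_rfl) subset_rfl

theorem sq_sub_mem_Icc_sq_iff {a b c x : ℝ} (ha : 0 ≤ a) (hab : a ≤ b) :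
    (x - c) ^ 2 ∈ Set.Icc (a ^ 2) (b ^ 2) ↔
      x ∈ Set.Icc (c - b) (c - a) ∪ Set.Icc (c + a) (c + b) := by
  simp only [Set.mem_Icc, Set.mem_union, sq_le_sq, abs_of_nonneg ha,
    abs_of_nonneg (ha.trans hab), le_abs, abs_le]
  constructor
  · rintro ⟨h1 | h1, h2, h3⟩
    · right; constructor <;> linarith
    · left; constructor <;> linarith
  · rintro (⟨h1, h2⟩ | ⟨h1, h2⟩)
    · exact ⟨Or.inr (by linarith), by linarith, by linarith⟩
    · exact ⟨Or.inl (by linarith), by linarith, by linarith⟩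

theorem Set.Icc_union_Icc_inter_Ioo_eq_empty {α : Type*} [LinearOrder α] (a b c d : α) :
    (Icc a b ∪ Icc c d) ∩ Ioo b c = ∅ := by
  ext x
  simp only [mem_inter_iff, mem_union, mem_Icc, mem_Ioo, mem_empty_iff_false, iff_false]
  rintro ⟨⟨-, hxb⟩ | ⟨hcx, -⟩, hbx, hxc⟩
  exacts [hxb.not_gt hbx, hcx.not_gt hxc]

noncomputable def blochHamiltonian (q k : ℝ) : Matrix (Fin 2) (Fin 2) ℂ :=
  !![((2 : ℝ) + q : ℂ), -(1 + exp (I * k)); -(1 + exp (-(I * k))), ((2 : ℝ) - q : ℂ)]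

theorem mem_spectrum_blochHamiltonian_iff (q k x : ℝ) :
    (x : ℂ) ∈ spectrum ℂ (blochHamiltonian q k) ↔ (x - 2) ^ 2 = q ^ 2 + (2 + 2 * Real.cos k) := by
  rw [blochHamiltonian, Matrix.mem_spectrum_fin_two, neg_mul_neg,
    one_add_exp_mul_one_add_exp_neg]
  norm_cast
  constructor <;> intro h <;> linear_combination h

theorem exists_eq_sq_add_two_add_two_cos_iff (q t : ℝ) :
    (∃ k ∈ Set.Ioc (-π) π, t = q ^ 2 + (2 + 2 * Real.cos k)) ↔
      t ∈ Set.Icc (q ^ 2) (q ^ 2 + 4) := by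
  constructor
  · rintro ⟨k, -, rfl⟩
    constructor <;> linarith [neg_one_le_cos k, cos_le_one k]
  · rintro ⟨h1, h2⟩
    obtain ⟨k, hk, hcos⟩ := surjOn_cos_Ioc (show (t - q ^ 2 - 2) / 2 ∈ Set.Icc (-1) 1 by
      constructor <;> linarith)
    exact ⟨k, hk, by rw [hcos]; ring⟩

theorem iUnion_spectrum_blochHamiltonian {q : ℝ} (hq : 0 ≤ q) :
    ⋃ k ∈ Set.Ioc (-π) π, {x : ℝ | (x : ℂ) ∈ spectrum ℂ (blochHamiltonian q k)} =
      Set.Icc (2 - √(4 + q ^ 2)) (2 - q) ∪ Set.Icc (2 + q) (2 + √(4 + q ^ 2)) := by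
  have hsq : √(4 + q ^ 2) ^ 2 = q ^ 2 + 4 := by rw [sq_sqrt (by positivity)]; ring
  have hq_le : q ≤ √(4 + q ^ 2) := by nlinarith [sqrt_nonneg (4 + q ^ 2)]
  ext x
  simp only [Set.mem_iUnion, Set.mem_ofPred_eq, mem_spectrum_blochHamiltonian_iff, exists_prop,
    exists_eq_sq_add_two_add_two_cos_iff, ← hsq, sq_sub_mem_Icc_sq_iff hq hq_le]

/-- The union over `k ∈ (-π, π]` of the spectra of the fiber operators `H(k)` equals
`[2-√(4+q²), 2-q] ∪ [2+q, 2+√(4+q²)]`; in particular this set has a gap of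
length `2q`. -/
theorem spectrum_1d_lattice (q : ℝ) (hq : 0 < q) :
    (⋃ k ∈ Set.Ioc (-π) π,
        {x : ℝ | (x : ℂ) ∈ spectrum ℂ
          (!![((2 : ℝ) + q : ℂ), -(1 + Complex.exp (Complex.I * k));
              -(1 + Complex.exp (-(Complex.I * k))), ((2 : ℝ) - q : ℂ)])}) =
      Set.Icc (2 - Real.sqrt (4 + q ^ 2)) (2 - q) ∪
        Set.Icc (2 + q) (2 + Real.sqrt (4 + q ^ 2)) ∧
    (Set.Icc (2 - Real.sqrt (4 + q ^ 2)) (2 - q) ∪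
        Set.Icc (2 + q) (2 + Real.sqrt (4 + q ^ 2))) ∩
      Set.Ioo (2 - q) (2 + q) = ∅ ∧ (2 + q) - (2 - q) = 2 * q :=
  ⟨iUnion_spectrum_blochHamiltonian hq.le, Set.Icc_union_Icc_inter_Ioo_eq_empty _ _ _ _, by ring⟩
end

section
/- Define f : ℝ² → ℝ by f(k₁, k₂) = 3 + 2cos k₁ + 2cos k₂ + 2cos(k₁ + k₂). Then f(k) = |1 + e^{ik₁} + e^{-ik₂}|², the minimum of f over ℝ² is 0, attained at (k₁, k₂) = ±(2π/3, 2π/3) (modulo 2π), and the maximum of f is 9, attained at (0,0) (modulo 2π). -/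
/-!
Splitting `z = 1 + e^{ik₁} + e^{-ik₂}` into real and imaginary parts gives the sum of squares
`f(k₁, k₂) = (1 + cos k₁ + cos k₂)² + (sin k₁ - sin k₂)²`. Hence `f = 0` exactly when
`cos k₁ = cos k₂ = -1/2` and `sin k₁ = sin k₂`, i.e. `k₁ ≡ k₂ ≡ ±2π/3`; and `f ≤ 9` with equality
exactly when all three cosines equal `1`.
-/

open Real Complex

noncomputable def hexagonalSymbol (a b : ℝ) : ℝ :=
  3 + 2 * Real.cos a + 2 * Real.cos b + 2 * Real.cos (a + b)

lemma Real.cos_two_pi_div_three : Real.cos (2 * π / 3) = -(1 / 2) := by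
  rw [show 2 * π / 3 = π - π / 3 by ring, Real.cos_pi_sub, Real.cos_pi_div_three]

lemma Real.cos_eq_neg_half_iff {x : ℝ} :
    Real.cos x = -(1 / 2) ↔ ∃ m : ℤ, x = 2 * π / 3 + 2 * π * m ∨ x = -(2 * π / 3) + 2 * π * m := by
  rw [← Real.cos_two_pi_div_three, Real.cos_eq_cos_iff]
  constructor
  · rintro ⟨k, h | h⟩
    · exact ⟨-k, .inl (by push_cast; linarith)⟩
    · exact ⟨k, .inr (by linarith)⟩
  · rintro ⟨m, h | h⟩
    · exact ⟨-m, .inl (by push_cast; linarith)⟩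
    · exact ⟨m, .inr (by linarith)⟩

namespace hexagonalSymbol

lemma eq_sq_add_sq (a b : ℝ) :
    hexagonalSymbol a b = (1 + Real.cos a + Real.cos b) ^ 2 + (Real.sin a - Real.sin b) ^ 2 := by
  rw [hexagonalSymbol, Real.cos_add]
  nlinarith [Real.sin_sq_add_cos_sq a, Real.sin_sq_add_cos_sq b]

lemma eq_norm_sq (a b : ℝ) :
    hexagonalSymbol a b = ‖1 + Complex.exp (Complex.I * a) + Complex.exp (-(Complex.I * b))‖ ^ 2 := by
  have hz : 1 + Complex.exp (Complex.I * a) + Complex.exp (-(Complex.I * b)) =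
      ((1 + Real.cos a + Real.cos b : ℝ) : ℂ) + ((Real.sin a - Real.sin b : ℝ) : ℂ) * Complex.I := by
    apply Complex.ext <;>
      simp [Complex.exp_re, Complex.exp_im, Complex.cos_ofReal_re, Complex.sin_ofReal_re,
        sub_eq_add_neg]
  rw [hz, Complex.sq_norm, Complex.normSq_add_mul_I, eq_sq_add_sq]

lemma nonneg (a b : ℝ) : 0 ≤ hexagonalSymbol a b := by
  rw [eq_sq_add_sq]
  positivity

lemma le_nine (a b : ℝ) : hexagonalSymbol a b ≤ 9 := by
  rw [hexagonalSymbol]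
  linarith [Real.cos_le_one a, Real.cos_le_one b, Real.cos_le_one (a + b)]

lemma eq_zero_iff_cos_eq_neg_half_and_coe_eq (a b : ℝ) :
    hexagonalSymbol a b = 0 ↔ Real.cos a = -(1 / 2) ∧ (b : Real.Angle) = a := by
  rw [eq_sq_add_sq]
  constructor
  · intro h
    have hcos : 1 + Real.cos a + Real.cos b = 0 := by nlinarith
    have hsin : Real.sin b = Real.sin a := by nlinarith
    -- `sin² a = sin² b` forces `cos² a = cos² b = (1 + cos a)²`
    have hcos_sq : Real.cos a ^ 2 = (1 + Real.cos a) ^ 2 := by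
      nlinarith [Real.sin_sq_add_cos_sq a, Real.sin_sq_add_cos_sq b]
    have ha : Real.cos a = -(1 / 2) := by linarith
    exact ⟨ha, Real.Angle.cos_sin_inj (by linarith) hsin⟩
  · rintro ⟨ha, hba⟩
    have hcos : Real.cos b = Real.cos a := by
      rw [← Real.Angle.cos_coe, hba, Real.Angle.cos_coe]
    have hsin : Real.sin b = Real.sin a := by
      rw [← Real.Angle.sin_coe, hba, Real.Angle.sin_coe]
    rw [hcos, hsin, ha]
    ring

lemma eq_zero_iff (a b : ℝ) :
    hexagonalSymbol a b = 0 ↔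
      ∃ m n : ℤ, (a = 2 * π / 3 + 2 * π * m ∧ b = 2 * π / 3 + 2 * π * n) ∨
        (a = -(2 * π / 3) + 2 * π * m ∧ b = -(2 * π / 3) + 2 * π * n) := by
  rw [eq_zero_iff_cos_eq_neg_half_and_coe_eq, Real.cos_eq_neg_half_iff,
    Real.Angle.angle_eq_iff_two_pi_dvd_sub]
  constructor
  · rintro ⟨⟨m, ha | ha⟩, k, hk⟩
    · exact ⟨m, m + k, .inl ⟨ha, by push_cast; linarith⟩⟩
    · exact ⟨m, m + k, .inr ⟨ha, by push_cast; linarith⟩⟩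
  · rintro ⟨m, n, ⟨ha, hb⟩ | ⟨ha, hb⟩⟩
    · exact ⟨⟨m, .inl ha⟩, n - m, by push_cast; linarith⟩
    · exact ⟨⟨m, .inr ha⟩, n - m, by push_cast; linarith⟩

lemma eq_nine_iff (a b : ℝ) :
    hexagonalSymbol a b = 9 ↔ ∃ m n : ℤ, a = 2 * π * m ∧ b = 2 * π * n := by
  have hcos_eq_one {x : ℝ} : Real.cos x = 1 ↔ ∃ m : ℤ, x = 2 * π * m := by
    rw [Real.cos_eq_one_iff]
    exact exists_congr fun m ↦ by constructor <;> intro h <;> linarith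
  constructor
  · intro h
    rw [hexagonalSymbol] at h
    have ha_le := Real.cos_le_one a
    have hb_le := Real.cos_le_one b
    have hab_le := Real.cos_le_one (a + b)
    obtain ⟨m, ha⟩ := hcos_eq_one.1 (show Real.cos a = 1 by linarith)
    obtain ⟨n, hb⟩ := hcos_eq_one.1 (show Real.cos b = 1 by linarith)
    exact ⟨m, n, ha, hb⟩
  · rintro ⟨m, n, ha, hb⟩
    have hca := hcos_eq_one.2 ⟨m, ha⟩
    have hcb := hcos_eq_one.2 ⟨n, hb⟩
    rw [eq_sq_add_sq, hca, hcb, Real.sin_eq_zero_iff_cos_eq.2 (.inl hca),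
      Real.sin_eq_zero_iff_cos_eq.2 (.inl hcb)]
    norm_num

end hexagonalSymbol

/-- The hexagonal-lattice symbol `f(k₁,k₂) = 3 + 2cos k₁ + 2cos k₂ + 2cos(k₁+k₂)`
equals `|1 + e^{ik₁} + e^{-ik₂}|²`, has minimum `0` attained exactly at
`±(2π/3, 2π/3)` mod `2π`, and maximum `9` attained exactly at `(0,0)` mod `2π`. -/
theorem hexagonal_symbol_properties
    (f : ℝ → ℝ → ℝ)
    (hf : ∀ k₁ k₂, f k₁ k₂ = 3 + 2 * Real.cos k₁ + 2 * Real.cos k₂ +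
      2 * Real.cos (k₁ + k₂)) :
    (∀ k₁ k₂ : ℝ, f k₁ k₂ =
        ‖(1 + Complex.exp (Complex.I * k₁) +
          Complex.exp (-(Complex.I * k₂)))‖ ^ 2) ∧
    (∀ k₁ k₂ : ℝ, 0 ≤ f k₁ k₂ ∧ f k₁ k₂ ≤ 9) ∧
    (∀ k₁ k₂ : ℝ, f k₁ k₂ = 0 ↔
      (∃ m n : ℤ, (k₁ = 2 * π / 3 + 2 * π * m ∧ k₂ = 2 * π / 3 + 2 * π * n) ∨
        (k₁ = -(2 * π / 3) + 2 * π * m ∧ k₂ = -(2 * π / 3) + 2 * π * n))) ∧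
    (∀ k₁ k₂ : ℝ, f k₁ k₂ = 9 ↔
      ∃ m n : ℤ, k₁ = 2 * π * m ∧ k₂ = 2 * π * n) := by
  obtain rfl : f = hexagonalSymbol := funext₂ hf
  exact ⟨hexagonalSymbol.eq_norm_sq,
    fun a b ↦ ⟨hexagonalSymbol.nonneg a b, hexagonalSymbol.le_nine a b⟩,
    hexagonalSymbol.eq_zero_iff, hexagonalSymbol.eq_nine_iff⟩
end

section
/- Let d ≥ 1 and t ∈ ℤ^d with t₁ + ... + t_d even and t ≠ 0. Define λ_t(k) = 2(d+1) - 2Σ_{j=1}^d cos k_j - 2cos(⟨t,k⟩) on ℝ^d. Then the supremum of λ_t over ℝ^d is strictly less than 4(d+1). -/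
open Real

/-!
`λ_t` factors through the torus `(ℝ / 2πℤ)^d`, which is compact, so its supremum is a value
`λ_t(θ)`. That value equals `4(d+1)` only if every `θᵢ = π`; but then
`⟨t, θ⟩ = (t₁ + ⋯ + t_d) π = 0` in `ℝ / 2πℤ` because the sum is even, so `cos ⟨t, θ⟩ = 1`.
-/

namespace Real.Angle

attribute [fun_prop] continuous_cos

instance : CompactSpace Angle :=
  haveI : Fact (0 < 2 * π) := ⟨two_pi_pos⟩
  AddCircle.compactSpace (2 * π)

theorem coe_sum {ι : Type*} (s : Finset ι) (f : ι → ℝ) :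
    ((∑ i ∈ s, f i : ℝ) : Angle) = ∑ i ∈ s, (f i : Angle) :=
  map_sum coeHom f s

theorem neg_one_le_cos (θ : Angle) : -1 ≤ cos θ := by
  induction θ using Real.Angle.induction_on with
  | h x => rw [cos_coe]; exact Real.neg_one_le_cos x

theorem cos_eq_neg_one_iff {θ : Angle} : cos θ = -1 ↔ θ = π := by
  rw [← cos_coe_pi, cos_eq_iff_eq_or_eq_neg, neg_coe_pi, or_self]

theorem even_zsmul_coe_pi {n : ℤ} (hn : Even n) : n • (π : Angle) = 0 := by
  obtain ⟨r, rfl⟩ := hn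
  rw [← two_mul, mul_comm, mul_zsmul, two_zsmul_coe_pi, zsmul_zero]

end Real.Angle

open Real.Angle in
theorem neg_succ_lt_sum_cos_add_cos_sum_zsmul {d : ℕ} (t : Fin d → ℤ)
    (ht : Even (∑ i, t i)) (θ : Fin d → Angle) :
    -((d : ℝ) + 1) < ∑ i, cos (θ i) + cos (∑ i, t i • θ i) := by
  have hsum : -(d : ℝ) ≤ ∑ i, cos (θ i) := by
    simpa using Finset.sum_le_sum fun i (_ : i ∈ Finset.univ) => neg_one_le_cos (θ i)
  by_cases hπ : ∀ i, θ i = π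
  · have hzero : ∑ i, t i • θ i = 0 := by
      simp only [hπ, ← Finset.sum_smul, even_zsmul_coe_pi ht]
    rw [hzero, Angle.cos_zero]
    linarith
  · obtain ⟨j, hj⟩ := not_forall.mp hπ
    have hlt : -(d : ℝ) < ∑ i, cos (θ i) := by
      simpa using Finset.sum_lt_sum (fun i (_ : i ∈ Finset.univ) => neg_one_le_cos (θ i))
        ⟨j, Finset.mem_univ j, (neg_one_le_cos (θ j)).lt_of_ne' (cos_eq_neg_one_iff.not.mpr hj)⟩
    linarith [neg_one_le_cos (∑ i, t i • θ i)]

theorem perturbed_lattice_sup_even_general (d : ℕ) (t : Fin d → ℤ)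
    (ht : Even (∑ i, t i))
    (lam : (Fin d → ℝ) → ℝ)
    (hlam : ∀ k, lam k = 2 * (d + 1) - 2 * ∑ i, Real.cos (k i) -
      2 * Real.cos (∑ i, (t i : ℝ) * k i)) :
    sSup (Set.range lam) < 4 * (d + 1) := by
  let F : (Fin d → Angle) → ℝ := fun θ =>
    2 * (d + 1) - 2 * ∑ i, Angle.cos (θ i) - 2 * Angle.cos (∑ i, t i • θ i)
  have hF : Continuous F := by unfold F; fun_prop
  have hlamF : ∀ k, lam k = F fun i => (k i : Angle) := fun k => by
    simp only [hlam, F, Angle.cos_coe, ← Angle.coe_zsmul, ← Angle.coe_sum, zsmul_eq_mul]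
  obtain ⟨θ₀, hθ₀⟩ := isCompact_univ.exists_isMaxOn Set.univ_nonempty hF.continuousOn
  calc sSup (Set.range lam) ≤ F θ₀ :=
        csSup_le (Set.range_nonempty _) <| by
          rintro _ ⟨k, rfl⟩
          exact hlamF k ▸ hθ₀.2 (Set.mem_univ _)
    _ < 4 * (d + 1) := by
        linarith [neg_succ_lt_sum_cos_add_cos_sum_zsmul t ht θ₀]

/-- If `t ≠ 0` and `t₁ + ... + t_d` is even, then the supremum of the perturbed band
function `λ_t(k) = 2(d+1) - 2Σ cos kᵢ - 2cos(⟨t,k⟩)` is strictly less than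
`4(d+1)`. -/
theorem perturbed_lattice_sup_even (d : ℕ) (hd : 1 ≤ d) (t : Fin d → ℤ)
    (ht : Even (∑ i, t i)) (ht0 : t ≠ 0)
    (lam : (Fin d → ℝ) → ℝ)
    (hlam : ∀ k, lam k = 2 * (d + 1) - 2 * ∑ i, Real.cos (k i) -
      2 * Real.cos (∑ i, (t i : ℝ) * k i)) :
    sSup (Set.range lam) < 4 * (d + 1) :=
  perturbed_lattice_sup_even_general d t ht lam hlam
end

section
/- For q > 0, the union over k = (k₁,k₂,k₃) ∈ (-π,π]³ of the eigenvalues of the Hermitian matrix H(k) with H₁₁ = 4+q, H₂₂ = 4-q, H₁₂ = -(1 + e^{-ik₁} + e^{-ik₂} + e^{-ik₃}), H₂₁ = conj(H₁₂), equals [4 - √(16+q²), 4-q] ∪ [4+q, 4+√(16+q²)]. -/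
/-!
The characteristic polynomial of `H(k)` is `(x - (4 + q)) (x - (4 - q)) - f(k)` with
`f(k) = |1 + e^{ik₁} + e^{ik₂} + e^{ik₃}|²`, so `x` is an eigenvalue of some `H(k)` iff
`(x - (4 + q)) (x - (4 - q))` lies in the range of `f` over the box. That range is `[0, 16]`:
`f ≤ 16` by the triangle inequality, `f` takes the values `16` at `0` and `0` at `(π, 0, π)`,
and the box is connected.
-/

open Real Complex ComplexConjugate

theorem Matrix.mem_spectrum_fin_two_iff {K : Type*} [Field K] (a b c d x : K) :
    x ∈ spectrum K !![a, b; c, d] ↔ (x - a) * (x - d) - b * c = 0 := by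
  rw [spectrum.mem_iff, Matrix.isUnit_iff_isUnit_det, isUnit_iff_ne_zero, not_ne_iff,
    Matrix.det_fin_two]
  simp [Matrix.algebraMap_eq_diagonal]

lemma mul_sub_add_sub_sub_mem_Icc_iff {a q M x : ℝ} (hq : 0 ≤ q) (hM : 0 ≤ M) :
    (x - (a + q)) * (x - (a - q)) ∈ Set.Icc 0 M ↔
      x ∈ Set.Icc (a - √(M + q ^ 2)) (a - q) ∪ Set.Icc (a + q) (a + √(M + q ^ 2)) := by
  have hs : √(M + q ^ 2) ^ 2 = M + q ^ 2 := Real.sq_sqrt (by positivity)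
  have hs0 : 0 ≤ √(M + q ^ 2) := Real.sqrt_nonneg _
  simp only [Set.mem_union, Set.mem_Icc]
  constructor
  · rintro ⟨h0, hM⟩
    rcases le_or_gt a x with hx | hx
    · right; constructor <;> nlinarith
    · left; constructor <;> nlinarith
  · rintro (⟨h1, h2⟩ | ⟨h1, h2⟩) <;> constructor <;> nlinarith

noncomputable def hexSymbol (k : ℝ × ℝ × ℝ) : ℂ :=
  1 + exp (I * k.1) + exp (I * k.2.1) + exp (I * k.2.2)

lemma conj_hexSymbol (k : ℝ × ℝ × ℝ) :
    conj (hexSymbol k) = 1 + exp (-(I * k.1)) + exp (-(I * k.2.1)) + exp (-(I * k.2.2)) := by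
  simp [hexSymbol, ← exp_conj]

lemma continuous_hexSymbol : Continuous hexSymbol := by
  unfold hexSymbol; fun_prop

lemma norm_hexSymbol_le (k : ℝ × ℝ × ℝ) : ‖hexSymbol k‖ ≤ 4 := by
  unfold hexSymbol
  calc _ ≤ ‖(1 : ℂ)‖ + ‖exp (I * k.1)‖ + ‖exp (I * k.2.1)‖ + ‖exp (I * k.2.2)‖ :=
        norm_add₄_le
    _ = 4 := by simp only [norm_one, norm_exp_I_mul_ofReal]; norm_num

lemma hexSymbol_zero : hexSymbol 0 = 4 := by
  simp [hexSymbol]; norm_num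

lemma hexSymbol_pi_zero_pi : hexSymbol (π, 0, π) = 0 := by
  simp [hexSymbol, mul_comm I, exp_pi_mul_I]

lemma image_normSq_hexSymbol :
    (fun k ↦ normSq (hexSymbol k)) ''
        (Set.Ioc (-π) π ×ˢ Set.Ioc (-π) π ×ˢ Set.Ioc (-π) π) = Set.Icc 0 16 := by
  refine subset_antisymm ?_ ?_
  · rintro _ ⟨k, -, rfl⟩
    dsimp only
    refine ⟨normSq_nonneg _, ?_⟩
    rw [← Complex.sq_norm]
    nlinarith [norm_hexSymbol_le k, norm_nonneg (hexSymbol k)]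
  · have hbox : IsPreconnected (Set.Ioc (-π) π ×ˢ Set.Ioc (-π) π ×ˢ Set.Ioc (-π) π) :=
      isPreconnected_Ioc.prod (isPreconnected_Ioc.prod isPreconnected_Ioc)
    have hπ := pi_pos
    have ivt := hbox.intermediate_value (a := (π, 0, π)) (b := 0)
      (by simp [hπ.le, hπ]) (by simp [hπ.le, hπ])
      (continuous_normSq.comp continuous_hexSymbol).continuousOn
    norm_num [hexSymbol_pi_zero_pi, hexSymbol_zero] at ivt
    exact ivt

/-- The union over `k ∈ (-π,π]³` of the eigenvalues of the fiber operator `H(k)` for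
the limit graph of the perturbed hexagonal lattice equals
`[4-√(16+q²), 4-q] ∪ [4+q, 4+√(16+q²)]`. -/
theorem spectrum_limit_graph_hexagonal (q : ℝ) (hq : 0 < q) :
    (⋃ k ∈ Set.Ioc (-π) π ×ˢ Set.Ioc (-π) π ×ˢ Set.Ioc (-π) π,
        {x : ℝ | (x : ℂ) ∈ spectrum ℂ
          (!![((4 : ℝ) + q : ℂ),
              -(1 + Complex.exp (-(Complex.I * (k.1 : ℝ))) +
                Complex.exp (-(Complex.I * (k.2.1 : ℝ))) +
                Complex.exp (-(Complex.I * (k.2.2 : ℝ))));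
              -(1 + Complex.exp (Complex.I * (k.1 : ℝ)) +
                Complex.exp (Complex.I * (k.2.1 : ℝ)) +
                Complex.exp (Complex.I * (k.2.2 : ℝ))), ((4 : ℝ) - q : ℂ)])}) =
      Set.Icc (4 - Real.sqrt (16 + q ^ 2)) (4 - q) ∪
        Set.Icc (4 + q) (4 + Real.sqrt (16 + q ^ 2)) := by
  ext x
  rw [← mul_sub_add_sub_sub_mem_Icc_iff hq.le (by norm_num), ← image_normSq_hexSymbol]
  simp only [Set.mem_iUnion, Set.mem_ofPred_eq, Set.mem_image, exists_prop]
  refine exists_congr fun k ↦ and_congr_right fun _ ↦ ?_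
  rw [Matrix.mem_spectrum_fin_two_iff, ← conj_hexSymbol, ← hexSymbol, neg_mul_neg,
    ← normSq_eq_conj_mul_self, sub_eq_zero, eq_comm]
  exact_mod_cast Iff.rfl
end

section
/- Let F : ℝ^n → ℝ be continuous and 2π-periodic in each coordinate, and for t ∈ ℤ^{n-1} let B_t = {k ∈ ℝ^n : t₁k₁ + ... + t_{n-1}k_{n-1} - k_n ∈ 2πℤ}. Suppose k₀ ∈ ℝ^n is a global minimum point of F. Then the infimum of F over B_t converges to F(k₀) as |t| → ∞; that is, for every ε > 0 there is R > 0 such that for all t with |t| ≥ R, inf_{k ∈ B_t} F(k) ≤ F(k₀) + ε (and trivially inf_{k ∈ B_t} F(k) ≥ F(k₀)). -/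
/-!
The hyperplanes `⟨t, x⟩ - y ∈ 2πℤ` are `2π / |t|` apart, so moving the first component of `k₀`
along `t` by at most `π / |t|` lands on one of them. As `|t| → ∞` these points tend to `k₀`, and
continuity of `F` at `k₀` brings `F` within `ε` of its minimum there.
-/

open Real

theorem exists_int_abs_sub_mul_le (s : ℝ) {p : ℝ} (hp : 0 < p) :
    ∃ m : ℤ, |s - p * m| ≤ p / 2 := by
  refine ⟨round (s / p), ?_⟩
  calc |s - p * round (s / p)| = |p * (s / p - round (s / p))| := by
        rw [mul_sub, mul_div_cancel₀ s hp.ne']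
    _ = p * |s / p - round (s / p)| := by rw [abs_mul, abs_of_pos hp]
    _ ≤ p * (1 / 2) := by gcongr; exact abs_sub_round (s / p)
    _ = p / 2 := by ring

theorem norm_le_sqrt_dotProduct_self {ι : Type*} [Fintype ι] (t : ι → ℝ) : ‖t‖ ≤ √(t ⬝ᵥ t) :=
  (pi_norm_le_iff_of_nonneg (Real.sqrt_nonneg _)).2 fun i =>
    Real.abs_le_sqrt <| by
      simpa only [dotProduct, sq] using
        Finset.single_le_sum (fun j _ => mul_self_nonneg (t j)) (Finset.mem_univ i)

theorem exists_dotProduct_eq_dist_le {ι : Type*} [Fintype ι] (x₀ : ι → ℝ) {t : ι → ℝ}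
    (ht : t ≠ 0) (a : ℝ) : ∃ x, t ⬝ᵥ x = a ∧ dist x x₀ ≤ |a - t ⬝ᵥ x₀| / √(t ⬝ᵥ t) := by
  have htt : 0 < t ⬝ᵥ t :=
    lt_of_le_of_ne (dotProduct_self_star_nonneg t) (by simpa [eq_comm] using ht)
  refine ⟨x₀ + ((a - t ⬝ᵥ x₀) / (t ⬝ᵥ t)) • t, ?_, ?_⟩
  · rw [dotProduct_add, dotProduct_smul, smul_eq_mul]
    field_simp
    ring
  · calc dist (x₀ + ((a - t ⬝ᵥ x₀) / (t ⬝ᵥ t)) • t) x₀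
        = |a - t ⬝ᵥ x₀| / (t ⬝ᵥ t) * ‖t‖ := by
          rw [dist_eq_norm, add_sub_cancel_left, norm_smul, Real.norm_eq_abs, abs_div,
            abs_of_pos htt]
      _ ≤ |a - t ⬝ᵥ x₀| / (√(t ⬝ᵥ t) * √(t ⬝ᵥ t)) * √(t ⬝ᵥ t) := by
          rw [Real.mul_self_sqrt htt.le]
          gcongr
          exact norm_le_sqrt_dotProduct_self t
      _ = |a - t ⬝ᵥ x₀| / √(t ⬝ᵥ t) := by
          have := Real.sqrt_pos.2 htt
          field_simp

theorem exists_dotProduct_sub_eq_mul_int_dist_le {ι : Type*} [Fintype ι] (x₀ : ι → ℝ) (y : ℝ)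
    {t : ι → ℝ} (ht : t ≠ 0) {p : ℝ} (hp : 0 < p) :
    ∃ x, (∃ m : ℤ, t ⬝ᵥ x - y = p * m) ∧ dist x x₀ ≤ p / 2 / √(t ⬝ᵥ t) := by
  obtain ⟨m, hm⟩ := exists_int_abs_sub_mul_le (t ⬝ᵥ x₀ - y) hp
  obtain ⟨x, hxa, hx⟩ := exists_dotProduct_eq_dist_le x₀ ht (y + p * m)
  refine ⟨x, ⟨m, by linarith⟩, hx.trans ?_⟩
  gcongr
  rwa [abs_sub_comm, show t ⬝ᵥ x₀ - (y + p * m) = t ⬝ᵥ x₀ - y - p * m by ring]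

theorem asymptotic_isospectrality_core_general {n : ℕ}
    (F : (Fin n → ℝ) × ℝ → ℝ)
    (hF : Continuous F)
    (k₀ : (Fin n → ℝ) × ℝ)
    (hmin : ∀ k, F k₀ ≤ F k) :
    ∀ ε > 0, ∃ R > 0, ∀ t : Fin n → ℤ,
      R ≤ Real.sqrt (∑ i, (t i : ℝ) ^ 2) →
      sInf (F '' {k : (Fin n → ℝ) × ℝ |
          ∃ m : ℤ, (∑ i, (t i : ℝ) * k.1 i) - k.2 = 2 * π * m})
        ≤ F k₀ + ε ∧
      F k₀ ≤ sInf (F '' {k : (Fin n → ℝ) × ℝ |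
          ∃ m : ℤ, (∑ i, (t i : ℝ) * k.1 i) - k.2 = 2 * π * m}) := by
  intro ε hε
  obtain ⟨δ, hδ, hball⟩ := Metric.eventually_nhds_iff.1 <|
    (hF.tendsto k₀).eventually (gt_mem_nhds (lt_add_of_pos_right (F k₀) hε))
  refine ⟨2 * π / δ, by positivity, fun t ht => ?_⟩
  set u : Fin n → ℝ := fun i => (t i : ℝ)
  have hnorm : ∑ i, (t i : ℝ) ^ 2 = u ⬝ᵥ u := by simp only [dotProduct, sq, u]
  have hu : u ≠ 0 := by
    rintro hu
    rw [hnorm, hu, zero_dotProduct, Real.sqrt_zero] at ht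
    exact ht.not_gt (by positivity)
  obtain ⟨x, hxB, hx⟩ := exists_dotProduct_sub_eq_mul_int_dist_le k₀.1 k₀.2 hu two_pi_pos
  have hclose : dist (x, k₀.2) k₀ < δ := by
    rw [Prod.dist_eq, dist_self, max_eq_left dist_nonneg]
    calc dist x k₀.1 ≤ 2 * π / 2 / √(u ⬝ᵥ u) := hx
      _ ≤ 2 * π / 2 / (2 * π / δ) := by gcongr; rwa [← hnorm]
      _ < δ := by field_simp; linarith
  have hmem : F (x, k₀.2) ∈ F '' {k | ∃ m : ℤ, u ⬝ᵥ k.1 - k.2 = 2 * π * m} :=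
    Set.mem_image_of_mem F hxB
  have hbdd : ∀ s, BddBelow (F '' s) := fun s =>
    ⟨F k₀, Set.forall_mem_image.2 fun k _ => hmin k⟩
  exact ⟨(csInf_le (hbdd _) hmem).trans (hball hclose).le,
    le_csInf ⟨_, hmem⟩ (Set.forall_mem_image.2 fun k _ => hmin k)⟩

/-- Abstract core of asymptotic isospectrality: for `F : ℝ^{n} × ℝ → ℝ` continuous
and `2π`-periodic in each coordinate with global minimum at `k₀`, the infimum of `F`
over `B_t = {(x,y) : ⟨t,x⟩ - y ∈ 2πℤ}` converges to `F k₀` as `|t| → ∞`. -/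
theorem asymptotic_isospectrality_core {n : ℕ}
    (F : (Fin n → ℝ) × ℝ → ℝ)
    (hF : Continuous F)
    (hper : ∀ (k : (Fin n → ℝ) × ℝ) (i : Fin n),
      F (Function.update k.1 i (k.1 i + 2 * π), k.2) = F k)
    (hper' : ∀ k : (Fin n → ℝ) × ℝ, F (k.1, k.2 + 2 * π) = F k)
    (k₀ : (Fin n → ℝ) × ℝ)
    (hmin : ∀ k, F k₀ ≤ F k) :
    ∀ ε > 0, ∃ R > 0, ∀ t : Fin n → ℤ,
      R ≤ Real.sqrt (∑ i, (t i : ℝ) ^ 2) →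
      sInf (F '' {k : (Fin n → ℝ) × ℝ |
          ∃ m : ℤ, (∑ i, (t i : ℝ) * k.1 i) - k.2 = 2 * π * m})
        ≤ F k₀ + ε ∧
      F k₀ ≤ sInf (F '' {k : (Fin n → ℝ) × ℝ |
          ∃ m : ℤ, (∑ i, (t i : ℝ) * k.1 i) - k.2 = 2 * π * m}) :=
  asymptotic_isospectrality_core_general F hF k₀ hmin
end
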